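/- arXiv:1910.08261 — 3 statements merged into one kernel-verified Lean document; each statement's English description precedes it below -/
import Mathlib

section
/- Maximum-entropy property of the geometric distribution: Let L be a random variable with finite range contained in the positive integers {1,2,3,...} and suppose E[L] ≤ m for some real m ≥ 1. Then H(L) ≤ m·h(1/m), where h(p) = −p·log p − (1−p)·log(1−p) is the binary entropy function; equivalently, H(L) ≤ m·log m − (m−1)·log(m−1). (This is the entropy of the geometric distribution on {1,2,...} with mean m.) -/
open MeasureTheory

lemma gibbs_pt (p q : ℝ) (hp : 0 ≤ p) (hq : 0 < q) :
    -(p * Real.log p) ≤ -(p * Real.log q) + q - p := by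
  rcases eq_or_lt_of_le hp with h | h
  · simp [← h]; linarith [hq.le]
  · have h1 := Real.log_le_sub_one_of_pos (show 0 < q / p from div_pos hq h)
    rw [Real.log_div hq.ne' h.ne'] at h1
    have h2 : p * (Real.log q - Real.log p) ≤ p * (q / p - 1) :=
      mul_le_mul_of_nonneg_left h1 hp
    have h3 : p * (q / p - 1) = q - p := by field_simp
    nlinarith

theorem entropy_le_geometric
    {Ω : Type*} [MeasurableSpace Ω] (P : Measure Ω) [IsProbabilityMeasure P]
    (L : Ω → ℕ) (hL : ∀ n : ℕ, MeasurableSet {ω | L ω = n})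
    (S : Finset ℕ) (hrange : ∀ ω, L ω ∈ S) (hpos : ∀ n ∈ S, 1 ≤ n)
    (m : ℝ) (hm : 1 ≤ m)
    (hE : ∑ n ∈ S, (P {ω | L ω = n}).toReal * (n : ℝ) ≤ m) :
    -- H(L) ≤ m · h(1/m)
    (-∑ n ∈ S, (P {ω | L ω = n}).toReal * Real.log (P {ω | L ω = n}).toReal)
      ≤ m * (-(1 / m) * Real.log (1 / m) - (1 - 1 / m) * Real.log (1 - 1 / m)) := by
  set p : ℕ → ℝ := fun n => (P {ω | L ω = n}).toReal with hpdef
  have hp0 : ∀ n, 0 ≤ p n := fun n => ENNReal.toReal_nonneg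
  -- the p's sum to 1
  have hdisj : (S : Set ℕ).PairwiseDisjoint (fun n => {ω | L ω = n}) := by
    intro x _ y _ hxy
    simp only [Function.onFun, Set.disjoint_left]
    intro ω h1 h2
    exact hxy (h1.symm.trans h2)
  have hU : ⋃ n ∈ S, {ω | L ω = n} = Set.univ := by
    ext ω
    simp only [Set.mem_iUnion, Set.mem_setOf_eq, Set.mem_univ, iff_true]
    exact ⟨L ω, hrange ω, rfl⟩
  have hone : ∑ n ∈ S, P {ω | L ω = n} = 1 := by
    rw [← measure_biUnion_finset hdisj (fun n _ => hL n), hU, measure_univ]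
  have hsum : ∑ n ∈ S, p n = 1 := by
    have := congrArg ENNReal.toReal hone
    rwa [ENNReal.toReal_sum (fun a _ => measure_ne_top P _), ENNReal.toReal_one] at this
  rcases eq_or_lt_of_le hm with hm1 | hm1
  · -- m = 1 case
    have hE1 : ∑ n ∈ S, p n * ((n : ℝ) - 1) ≤ 0 := by
      have : ∑ n ∈ S, p n * ((n : ℝ) - 1) = (∑ n ∈ S, p n * (n : ℝ)) - ∑ n ∈ S, p n := by
        rw [← Finset.sum_sub_distrib]; congr 1; ext n; ring
      rw [this, hsum]
      rw [← hm1] at hE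
      linarith
    have hz : ∀ n ∈ S, p n * ((n : ℝ) - 1) = 0 := by
      intro n hn
      have hnn : ∀ i ∈ S, 0 ≤ p i * ((i : ℝ) - 1) := by
        intro i hi
        have : (1 : ℝ) ≤ (i : ℝ) := by exact_mod_cast hpos i hi
        have := hp0 i
        nlinarith
      exact (Finset.sum_eq_zero_iff_of_nonneg hnn).mp
        (le_antisymm hE1 (Finset.sum_nonneg hnn)) n hn
    have hz2 : ∀ n ∈ S, 2 ≤ n → p n = 0 := by
      intro n hn h2
      have := hz n hn
      have h2' : (2 : ℝ) ≤ (n : ℝ) := by exact_mod_cast h2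
      rcases mul_eq_zero.mp this with h | h
      · exact h
      · linarith
    have h1S : 1 ∈ S := by
      by_contra h1
      have : ∑ n ∈ S, p n = 0 := by
        apply Finset.sum_eq_zero
        intro n hn
        have := hpos n hn
        rcases Nat.lt_or_ge n 2 with h | h
        · interval_cases n
          · exact absurd hn h1
        · exact hz2 n hn h
      rw [hsum] at this; norm_num at this
    have hp1 : p 1 = 1 := by
      rw [← hsum]
      exact (Finset.sum_eq_single_of_mem 1 h1S (by
        intro b hb hb1
        have := hpos b hb
        have : 2 ≤ b := by omega
        exact hz2 b hb this)).symm
    have hL0 : ∑ n ∈ S, p n * Real.log (p n) = 0 := by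
      apply Finset.sum_eq_zero
      intro n hn
      rcases eq_or_ne n 1 with h | h
      · rw [h, hp1, Real.log_one, mul_zero]
      · have : 2 ≤ n := by have := hpos n hn; omega
        rw [hz2 n hn this, zero_mul]
    rw [hL0, ← hm1]
    norm_num
  · -- m > 1 case
    have hm0 : (0 : ℝ) < m := by linarith
    set a : ℝ := 1 / m with hadef
    set r : ℝ := 1 - 1 / m with hrdef
    have ha : 0 < a := by positivity
    have ha1 : a < 1 := by rw [hadef]; rw [div_lt_one hm0]; linarith
    have hr : 0 < r := by rw [hrdef]; linarith
    have hr1 : r < 1 := by rw [hrdef]; linarith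
    set q : ℕ → ℝ := fun n => a * r ^ (n - 1) with hqdef
    have hq : ∀ n, 0 < q n := fun n => mul_pos ha (pow_pos hr _)
    -- sum of q over S is at most 1
    have hqsum : ∑ n ∈ S, q n ≤ 1 := by
      set f : ℕ → ℝ := fun n => if 1 ≤ n then q n else 0 with hfdef
      have hfs : Summable f := by
        rw [← summable_nat_add_iff 1]
        have : (fun n => f (n + 1)) = fun n => a * r ^ n := by
          ext n; simp [hfdef, hqdef]
        rw [this]
        exact (summable_geometric_of_lt_one hr.le hr1).mul_left a
      have hft : ∑' n, f n = 1 := by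
        rw [Summable.tsum_eq_zero_add hfs]
        have h0 : f 0 = 0 := by simp [hfdef]
        have h1 : (fun n => f (n + 1)) = fun n => a * r ^ n := by
          ext n; simp [hfdef, hqdef]
        rw [h0, h1, tsum_mul_left, tsum_geometric_of_lt_one hr.le hr1]
        have : 1 - r = a := by rw [hrdef, hadef]; ring
        rw [this, zero_add, mul_inv_cancel₀ ha.ne']
      have heq : ∑ n ∈ S, q n = ∑ n ∈ S, f n := by
        apply Finset.sum_congr rfl
        intro n hn
        simp [hfdef, hpos n hn]
      rw [heq, ← hft]
      apply Summable.sum_le_tsum S _ hfs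
      intro n _
      by_cases h : 1 ≤ n <;> simp [hfdef, h, (hq n).le]
    -- Gibbs inequality
    have gibbs : (-∑ n ∈ S, p n * Real.log (p n))
        ≤ ∑ n ∈ S, (-(p n * Real.log (q n))) := by
      have step : (-∑ n ∈ S, p n * Real.log (p n))
          ≤ ∑ n ∈ S, (-(p n * Real.log (q n)) + q n - p n) := by
        rw [← Finset.sum_neg_distrib]
        exact Finset.sum_le_sum (fun n _ => gibbs_pt (p n) (q n) (hp0 n) (hq n))
      have expand : ∑ n ∈ S, (-(p n * Real.log (q n)) + q n - p n)
          = (∑ n ∈ S, (-(p n * Real.log (q n)))) + (∑ n ∈ S, q n) - ∑ n ∈ S, p n := by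
        simp only [sub_eq_add_neg, Finset.sum_add_distrib, Finset.sum_neg_distrib]
      rw [expand, hsum] at step
      linarith
    -- compute cross entropy
    have hx : ∑ n ∈ S, (-(p n * Real.log (q n)))
        = -Real.log a - Real.log r * ((∑ n ∈ S, p n * (n : ℝ)) - 1) := by
      have hterm : ∀ n ∈ S, -(p n * Real.log (q n))
          = -(p n * Real.log a) - (p n * (n : ℝ) - p n) * Real.log r := by
        intro n hn
        have hcast : ((n - 1 : ℕ) : ℝ) = (n : ℝ) - 1 := by
          have := hpos n hn
          push_cast [Nat.cast_sub this]
          ring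
        rw [hqdef]
        simp only
        rw [Real.log_mul ha.ne' (pow_pos hr _).ne', Real.log_pow, hcast]
        ring
      rw [Finset.sum_congr rfl hterm]
      rw [Finset.sum_sub_distrib, Finset.sum_neg_distrib, ← Finset.sum_mul,
        ← Finset.sum_mul, Finset.sum_sub_distrib, hsum]
      ring
    -- final bound
    have hlogr : Real.log r < 0 := Real.log_neg hr hr1
    have hEle : (∑ n ∈ S, p n * (n : ℝ)) - 1 ≤ m - 1 := by
      have : ∑ n ∈ S, p n * (n : ℝ) ≤ m := hE
      linarith
    have hbound : ∑ n ∈ S, (-(p n * Real.log (q n)))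
        ≤ -Real.log a - Real.log r * (m - 1) := by
      rw [hx]
      have : Real.log r * (m - 1) ≤ Real.log r * ((∑ n ∈ S, p n * (n : ℝ)) - 1) := by
        apply mul_le_mul_of_nonpos_left hEle hlogr.le
      linarith
    have hrhs : m * (-(1 / m) * Real.log (1 / m) - (1 - 1 / m) * Real.log (1 - 1 / m))
        = -Real.log a - Real.log r * (m - 1) := by
      rw [← hadef, ← hrdef]
      have h1 : m * (-a * Real.log a - r * Real.log r)
          = -(m * a) * Real.log a - (m * r) * Real.log r := by ring
      have hma : m * a = 1 := by rw [hadef]; field_simp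
      have hmr : m * r = m - 1 := by rw [hrdef]; field_simp
      rw [h1, hma, hmr]; ring
    rw [hrhs]
    exact le_trans gibbs hbound
end

section
/- Entropy bound for random bit strings via expected length (eq. (44) of the paper): Let M be a random variable taking finitely many values in {0,1}*, each of length at least 1, and suppose E[len(M)] ≤ m for some real m ≥ 1. Then H(M) ≤ m·(log 2 + h(1/m)), where h(p) = −p·log p − (1−p)·log(1−p) is the binary entropy function. -/
/-!
Compare the law `p` of `M` with `q(s) = θ (1 - θ)^(n-1) / 2^n`, where `n = len s` and `θ = 1/m`:
draw a length geometrically, then a string of that length uniformly. At most `2^n` strings have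
length `n`, so `∑ q ≤ 1`, and Gibbs' inequality gives
`H(M) ≤ -E[log q] = E[len M] (log 2 - log (1 - θ)) + log (1 - θ) - log θ`.
This is increasing in `E[len M]` and equals `m (log 2 + h θ)` at `E[len M] = m`. At `m = 1`
the weights `q` vanish on longer strings, so that case is the limit `m' ↓ 1`.
-/

open MeasureTheory Real Finset

lemma sub_le_mul_log_sub_mul_log {p q : ℝ} (hp : 0 ≤ p) (hq : 0 < q) :
    p - q ≤ p * log p - p * log q := by
  rcases hp.eq_or_lt with rfl | hp
  · simpa using hq.le
  have h := mul_le_mul_of_nonneg_left (log_le_sub_one_of_pos (div_pos hq hp)) hp.le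
  rw [log_div hq.ne' hp.ne', mul_sub_one, mul_div_cancel₀ q hp.ne'] at h
  linarith

lemma neg_sum_mul_log_le_neg_sum_mul_log {ι : Type*} {s : Finset ι} {p q : ι → ℝ}
    (hp : ∀ i ∈ s, 0 ≤ p i) (hq : ∀ i ∈ s, 0 < q i)
    (hp1 : ∑ i ∈ s, p i = 1) (hq1 : ∑ i ∈ s, q i ≤ 1) :
    -∑ i ∈ s, p i * log (p i) ≤ -∑ i ∈ s, p i * log (q i) := by
  have h := sum_le_sum fun i hi => sub_le_mul_log_sub_mul_log (hp i hi) (hq i hi)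
  rw [sum_sub_distrib, sum_sub_distrib, hp1] at h
  linarith

lemma sum_comp_length_le {α : Type*} [Fintype α] (F : Finset (List α)) {g : ℕ → ℝ}
    (hg : ∀ n, 0 ≤ g n) :
    ∑ s ∈ F, g s.length ≤ ∑ n ∈ F.image List.length, (Fintype.card α : ℝ) ^ n * g n := by
  rw [← sum_fiberwise_of_maps_to fun s hs => mem_image_of_mem List.length hs]
  refine sum_le_sum fun n _ => ?_
  rw [sum_congr rfl fun s hs => congrArg g (mem_filter.mp hs).2, sum_const, nsmul_eq_mul]
  gcongr
  · exact hg n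
  · exact_mod_cast card_filter_length_eq_le

lemma pow_pred_sub_pow_nonneg {x : ℝ} (hx0 : 0 ≤ x) (hx1 : x ≤ 1) (n : ℕ) :
    0 ≤ x ^ (n - 1) - x ^ n :=
  sub_nonneg.mpr (pow_le_pow_of_le_one hx0 hx1 (Nat.sub_le n 1))

-- Telescoping; the term `n = 0` vanishes since `0 - 1 = 0` in `ℕ`.
lemma sum_pow_pred_sub_pow_le_one {x : ℝ} (hx0 : 0 ≤ x) (hx1 : x ≤ 1) (T : Finset ℕ) :
    ∑ n ∈ T, (x ^ (n - 1) - x ^ n) ≤ 1 :=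
  calc ∑ n ∈ T, (x ^ (n - 1) - x ^ n)
      ≤ ∑ n ∈ range (T.sup id).succ, (x ^ (n - 1) - x ^ n) :=
        sum_le_sum_of_subset_of_nonneg T.subset_range_sup_succ fun n _ _ =>
          pow_pred_sub_pow_nonneg hx0 hx1 n
    _ = 1 - x ^ (T.sup id) := by
        simpa using sum_range_sub' (fun n => x ^ (n - 1)) (T.sup id).succ
    _ ≤ 1 := sub_le_self _ (pow_nonneg hx0 _)

lemma neg_sum_mul_log_le_of_sum_mul_length_le_of_one_lt {F : Finset (List Bool)}
    {p : List Bool → ℝ} (hp0 : ∀ s ∈ F, 0 ≤ p s) (hp1 : ∑ s ∈ F, p s = 1)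
    (hlen : ∀ s ∈ F, 1 ≤ s.length) {m : ℝ} (hm : 1 < m)
    (hE : ∑ s ∈ F, p s * s.length ≤ m) :
    -∑ s ∈ F, p s * log (p s) ≤ m * (log 2 + binEntropy m⁻¹) := by
  set x := 1 - m⁻¹ with hx
  have hm0 : 0 < m := by linarith
  have hx0 : 0 < x := by rw [hx, sub_pos]; exact inv_lt_one_of_one_lt₀ hm
  have hx1 : x < 1 := by rw [hx, sub_lt_self_iff]; positivity
  have hdiff : ∀ n, 1 ≤ n → x ^ (n - 1) - x ^ n = x ^ (n - 1) * m⁻¹ := fun n hn => by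
    obtain ⟨k, rfl⟩ := Nat.exists_eq_add_of_le' hn
    simp only [Nat.add_sub_cancel, pow_succ, hx]
    ring
  set q : List Bool → ℝ := fun s => (x ^ (s.length - 1) - x ^ s.length) / 2 ^ s.length
  have hq0 : ∀ s ∈ F, 0 < q s := fun s hs => by
    simp only [q, hdiff _ (hlen s hs)]
    positivity
  have hq1 : ∑ s ∈ F, q s ≤ 1 :=
    calc ∑ s ∈ F, q s
        ≤ ∑ n ∈ F.image List.length, (2 : ℝ) ^ n * ((x ^ (n - 1) - x ^ n) / 2 ^ n) := by
          simpa using sum_comp_length_le F (g := fun n => (x ^ (n - 1) - x ^ n) / 2 ^ n)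
            fun n => div_nonneg (pow_pred_sub_pow_nonneg hx0.le hx1.le n) (by positivity)
      _ = ∑ n ∈ F.image List.length, (x ^ (n - 1) - x ^ n) := by
          refine sum_congr rfl fun n _ => ?_
          field_simp
      _ ≤ 1 := sum_pow_pred_sub_pow_le_one hx0.le hx1.le _
  have hlogq : ∀ s ∈ F, log (q s) = (s.length - 1) * log x - log m - s.length * log 2 :=
    fun s hs => by
      have h1 := hlen s hs
      simp only [q, hdiff _ h1]
      rw [log_div (by positivity) (by positivity), log_mul (by positivity) (by positivity),
        log_pow, log_pow, log_inv, Nat.cast_sub h1, Nat.cast_one]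
      ring
  set E := ∑ s ∈ F, p s * s.length
  have hcross : -∑ s ∈ F, p s * log (q s) = E * (log 2 - log x) + log x + log m := by
    have hterm : ∀ s ∈ F, -(p s * log (q s))
        = p s * s.length * (log 2 - log x) + p s * (log x + log m) := fun s hs => by
      rw [hlogq s hs]
      ring
    rw [← sum_neg_distrib, sum_congr rfl hterm, sum_add_distrib, ← sum_mul, ← sum_mul, hp1,
      one_mul, add_assoc]
  have hlogx : log x ≤ 0 := log_nonpos hx0.le hx1.le
  have hlog2 : 0 ≤ log 2 := log_nonneg one_le_two
  calc -∑ s ∈ F, p s * log (p s)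
      ≤ -∑ s ∈ F, p s * log (q s) := neg_sum_mul_log_le_neg_sum_mul_log hp0 hq0 hp1 hq1
    _ = E * (log 2 - log x) + log x + log m := hcross
    _ ≤ m * (log 2 - log x) + log x + log m := by gcongr; linarith
    _ = m * (log 2 + binEntropy m⁻¹) := by
        have hmx : m * x = m - 1 := by rw [hx, mul_one_sub, mul_inv_cancel₀ hm0.ne']
        simp only [binEntropy, ← hx, log_inv, neg_neg]
        linear_combination log x * hmx - log m * mul_inv_cancel₀ hm0.ne'

lemma neg_sum_mul_log_le_of_sum_mul_length_le {F : Finset (List Bool)} {p : List Bool → ℝ}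
    (hp0 : ∀ s ∈ F, 0 ≤ p s) (hp1 : ∑ s ∈ F, p s = 1) (hlen : ∀ s ∈ F, 1 ≤ s.length)
    {m : ℝ} (hm : 1 ≤ m) (hE : ∑ s ∈ F, p s * s.length ≤ m) :
    -∑ s ∈ F, p s * log (p s) ≤ m * (log 2 + binEntropy m⁻¹) := by
  have hcont : ContinuousAt (fun m : ℝ => m * (log 2 + binEntropy m⁻¹)) m := by
    have : m ≠ 0 := by positivity
    fun_prop (disch := assumption)
  refine ge_of_tendsto (hcont.tendsto.mono_left (nhdsWithin_le_nhds (s := Set.Ioi m))) ?_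
  filter_upwards [self_mem_nhdsWithin] with m' (hm' : m < m')
  exact neg_sum_mul_log_le_of_sum_mul_length_le_of_one_lt hp0 hp1 hlen (hm.trans_lt hm')
    (hE.trans hm'.le)

theorem entropy_of_bitstring_via_expected_length
    {Ω : Type*} [MeasurableSpace Ω] (P : Measure Ω) [IsProbabilityMeasure P]
    (M : Ω → List Bool)
    (hM : ∀ s : List Bool, MeasurableSet {ω | M ω = s})
    (F : Finset (List Bool)) (hrange : ∀ ω, M ω ∈ F)
    (hlen : ∀ s ∈ F, 1 ≤ s.length)
    (m : ℝ) (hm : 1 ≤ m)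
    (hE : ∑ s ∈ F, (P {ω | M ω = s}).toReal * (s.length : ℝ) ≤ m) :
    -- H(M) ≤ m · (log 2 + h(1/m))
    (-∑ s ∈ F, (P {ω | M ω = s}).toReal * Real.log (P {ω | M ω = s}).toReal)
      ≤ m * (Real.log 2 +
          (-(1 / m) * Real.log (1 / m) - (1 - 1 / m) * Real.log (1 - 1 / m))) := by
  have hp1 : ∑ s ∈ F, P.real (M ⁻¹' {s}) = 1 := by
    rw [sum_measureReal_preimage_singleton F fun s _ => hM s,
      Set.preimage_eq_univ_iff.mpr fun _ ⟨ω, hω⟩ => hω ▸ hrange ω, probReal_univ]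
  have hbin : -(1 / m) * log (1 / m) - (1 - 1 / m) * log (1 - 1 / m) = binEntropy m⁻¹ := by
    rw [one_div, binEntropy_eq_negMulLog_add_negMulLog_one_sub, negMulLog, negMulLog]
    ring
  rw [hbin]
  exact neg_sum_mul_log_le_of_sum_mul_length_le (fun _ _ => measureReal_nonneg) hp1 hlen hm hE
end

section
/- Single-letterization identity for I(M;Xⁿ) (steps (45)–(62) of the paper): Let M and X_1,…,X_n be random variables with finite ranges on a common probability space, let Q denote the joint law of Xⁿ = (X_1,…,X_n) on 𝒳ⁿ with coordinate marginals Q_1,…,Q_n, and let P be a pmf on 𝒳 with P(x) > 0 for all x. Then I(M; (X_1,…,X_n)) = Σ_{t=1}ⁿ I((M, X_1,…,X_{t−1}); X_t) + Σ_{t=1}ⁿ D(Q_t ‖ P) − D(Q ‖ P^{⊗n}), where P^{⊗n} is the n-fold product of P. In particular, I(M; Xⁿ) ≥ Σ_{t=1}ⁿ I((M, X_1,…,X_{t−1}); X_t) − D(Q ‖ P^{⊗n}). -/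
/-!
Write `N(Y) = ∑ q_Y log q_Y` for the negative entropy of the law `q_Y` of `Y`. Then
`I(A; B) = N(A, B) - N(A) - N(B)`, and since `(M, X^{t-1}, X_t)` carries the same information as
`(M, Xᵗ)`, the chain-rule sum telescopes to `N(M, Xⁿ) - N(M) - ∑ₜ N(X_t)`. On the divergence side
`D(Q_t ‖ P) = N(X_t) - E log P(X_t)`, and because `log P^{⊗n}` is a sum over coordinates,
`D(Q ‖ P^{⊗n}) = N(Xⁿ) - ∑ₜ E log P(X_t)`. Everything cancels to `N(M, Xⁿ) - N(M) - N(Xⁿ)`, which is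
`I(M; Xⁿ)`. The inequality drops the terms `D(Q_t ‖ P)`, nonnegative by Gibbs' inequality.
-/

/-- Mutual information `I(f(ω); g(ω))` of two finite-range functions of a
finitely distributed random element with law `μ` (natural logarithm). -/
noncomputable def miFun {Ω A B : Type} [Fintype Ω] [Fintype A] [Fintype B]
    [DecidableEq A] [DecidableEq B] (μ : Ω → ℝ) (f : Ω → A) (g : Ω → B) : ℝ :=
  ∑ a : A, ∑ b : B,
    (∑ ω, if f ω = a ∧ g ω = b then μ ω else 0) *
      Real.log ((∑ ω, if f ω = a ∧ g ω = b then μ ω else 0) /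
        ((∑ ω, if f ω = a then μ ω else 0) * (∑ ω, if g ω = b then μ ω else 0)))

open Finset Real InformationTheory

theorem Fin.sum_succ_sub_castSucc {G : Type*} [AddCommGroup G] {n : ℕ} (f : Fin (n + 1) → G) :
    ∑ i : Fin n, (f i.succ - f i.castSucc) = f (Fin.last n) - f 0 := by
  induction n with
  | zero => simp
  | succ n ih =>
    rw [Fin.sum_univ_castSucc]
    simp only [Fin.succ_castSucc]
    rw [ih (fun i => f i.castSucc), Fin.succ_last, Fin.castSucc_zero]
    abel

lemma mul_log_div_mul {x y z : ℝ} (hx : 0 ≤ x) (hxy : x ≤ y) (hxz : x ≤ z) :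
    x * log (x / (y * z)) = x * log x - x * log y - x * log z := by
  rcases hx.eq_or_lt with rfl | hx
  · simp
  · have hy : 0 < y := hx.trans_le hxy
    have hz : 0 < z := hx.trans_le hxz
    rw [log_div hx.ne' (by positivity), log_mul hy.ne' hz.ne']
    ring

section Finite

variable {A : Type} [Fintype A]

lemma sum_mul_log_div (q p : A → ℝ) (hp : ∀ a, p a ≠ 0) :
    ∑ a, q a * log (q a / p a) = ∑ a, q a * log (q a) - ∑ a, q a * log (p a) := by
  rw [← sum_sub_distrib]
  refine sum_congr rfl fun a _ => ?_
  rcases eq_or_ne (q a) 0 with hq | hq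
  · simp [hq]
  · rw [log_div hq (hp a)]
    ring

lemma sum_mul_log_div_nonneg (q p : A → ℝ) (hq : ∀ a, 0 ≤ q a) (hp : ∀ a, 0 < p a)
    (hqp : ∑ a, q a = ∑ a, p a) :
    0 ≤ ∑ a, q a * log (q a / p a) := by
  have hterm : ∀ a, q a * log (q a / p a) = p a * klFun (q a / p a) + (q a - p a) := by
    intro a
    have hpa := (hp a).ne'
    rw [klFun_apply]
    field_simp
    ring
  rw [sum_congr rfl fun a _ => hterm a, sum_add_distrib, sum_sub_distrib, hqp, sub_self,
    add_zero]
  exact sum_nonneg fun a _ => mul_nonneg (hp a).le (klFun_nonneg (div_nonneg (hq a) (hp a).le))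

end Finite

noncomputable section Marginal

variable {Ω A B : Type} [Fintype Ω] [DecidableEq A] [DecidableEq B]

def marginal (μ : Ω → ℝ) (f : Ω → A) (a : A) : ℝ :=
  ∑ ω, if f ω = a then μ ω else 0

def negEntropy [Fintype A] (μ : Ω → ℝ) (f : Ω → A) : ℝ :=
  ∑ a, marginal μ f a * log (marginal μ f a)

lemma marginal_nonneg {μ : Ω → ℝ} (hμ : ∀ ω, 0 ≤ μ ω) (f : Ω → A) (a : A) :
    0 ≤ marginal μ f a :=
  sum_nonneg fun ω _ => ite_nonneg (hμ ω) le_rfl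

lemma sum_marginal_mul [Fintype A] (μ : Ω → ℝ) (f : Ω → A) (φ : A → ℝ) :
    ∑ a, marginal μ f a * φ a = ∑ ω, μ ω * φ (f ω) := by
  simp only [marginal, sum_mul, ite_mul, zero_mul]
  rw [sum_comm]
  simp

lemma sum_marginal [Fintype A] (μ : Ω → ℝ) (f : Ω → A) : ∑ a, marginal μ f a = ∑ ω, μ ω := by
  simpa using sum_marginal_mul μ f fun _ => 1

omit [DecidableEq A] in
lemma marginal_snd [Fintype A] [Fintype B] (μ : A × B → ℝ) (b : B) :
    marginal μ Prod.snd b = ∑ a, μ (a, b) := by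
  simp [marginal, Fintype.sum_prod_type]

lemma marginal_le_marginal_comp {μ : Ω → ℝ} (hμ : ∀ ω, 0 ≤ μ ω) (f : Ω → A) (e : A → B)
    (a : A) : marginal μ f a ≤ marginal μ (fun ω => e (f ω)) (e a) :=
  sum_le_sum fun ω _ => by
    by_cases h : f ω = a
    · simp [h]
    · rw [if_neg h]
      exact ite_nonneg (hμ ω) le_rfl

lemma marginal_comp_of_injective (μ : Ω → ℝ) (f : Ω → A) {e : A → B}
    (he : Function.Injective e) (a : A) :
    marginal μ (fun ω => e (f ω)) (e a) = marginal μ f a := by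
  simp only [marginal, he.eq_iff]

lemma negEntropy_eq_sum [Fintype A] (μ : Ω → ℝ) (f : Ω → A) :
    negEntropy μ f = ∑ ω, μ ω * log (marginal μ f (f ω)) :=
  sum_marginal_mul μ f _

lemma negEntropy_comp_of_injective [Fintype A] [Fintype B] (μ : Ω → ℝ) (f : Ω → A) {e : A → B}
    (he : Function.Injective e) : negEntropy μ (fun ω => e (f ω)) = negEntropy μ f := by
  simp only [negEntropy_eq_sum, marginal_comp_of_injective μ f he]

lemma sum_marginal_mul_log_div [Fintype A] (μ : Ω → ℝ) (f : Ω → A) {q : A → ℝ}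
    (hq : ∀ a, q a ≠ 0) :
    ∑ a, marginal μ f a * log (marginal μ f a / q a)
      = negEntropy μ f - ∑ a, marginal μ f a * log (q a) :=
  sum_mul_log_div _ _ hq

lemma miFun_eq_sum_prod [Fintype A] [Fintype B] (μ : Ω → ℝ) (f : Ω → A) (g : Ω → B) :
    miFun μ f g = ∑ p : A × B, marginal μ (fun ω => (f ω, g ω)) p *
      log (marginal μ (fun ω => (f ω, g ω)) p / (marginal μ f p.1 * marginal μ g p.2)) := by
  simp only [miFun, marginal, Fintype.sum_prod_type, Prod.mk.injEq]

theorem miFun_eq_negEntropy [Fintype A] [Fintype B] {μ : Ω → ℝ} (hμ : ∀ ω, 0 ≤ μ ω)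
    (f : Ω → A) (g : Ω → B) :
    miFun μ f g = negEntropy μ (fun ω => (f ω, g ω)) - negEntropy μ f - negEntropy μ g := by
  have hterm : ∀ p : A × B,
      marginal μ (fun ω => (f ω, g ω)) p *
        log (marginal μ (fun ω => (f ω, g ω)) p / (marginal μ f p.1 * marginal μ g p.2))
      = marginal μ (fun ω => (f ω, g ω)) p * log (marginal μ (fun ω => (f ω, g ω)) p)
        - marginal μ (fun ω => (f ω, g ω)) p * log (marginal μ f p.1)
        - marginal μ (fun ω => (f ω, g ω)) p * log (marginal μ g p.2) := fun p =>
    mul_log_div_mul (marginal_nonneg hμ _ p) (marginal_le_marginal_comp hμ _ Prod.fst p)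
      (marginal_le_marginal_comp hμ _ Prod.snd p)
  rw [miFun_eq_sum_prod, sum_congr rfl fun p _ => hterm p]
  simp only [sum_sub_distrib, negEntropy_eq_sum, sum_marginal_mul]

lemma sum_marginal_mul_log_prod {ι X : Type} [Fintype ι] [DecidableEq ι] [Fintype X]
    [DecidableEq X] (μ : Ω → ℝ) (x : Ω → ι → X) {P : X → ℝ} (hP : ∀ y, P y ≠ 0) :
    ∑ xs, marginal μ x xs * log (∏ t, P (xs t))
      = ∑ t, ∑ y, marginal μ (fun ω => x ω t) y * log (P y) := by
  simp only [sum_marginal_mul]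
  simp only [log_prod fun t _ => hP _, mul_sum]
  exact sum_comm

end Marginal

section ChainRule

variable {Ω M X : Type} [Fintype Ω] [Fintype M] [DecidableEq M] [Fintype X] [DecidableEq X]
  {n : ℕ} (μ : Ω → ℝ) (m : Ω → M) (x : Ω → Fin n → X)

lemma negEntropy_take_zero :
    negEntropy μ (fun ω => (m ω, Fin.take 0 n.zero_le (x ω))) = negEntropy μ m := by
  simp only [Fin.take_zero]
  exact negEntropy_comp_of_injective μ m (e := fun a => (a, fun i : Fin 0 => Fin.elim0 i))
    fun a b h => congrArg Prod.fst h

lemma negEntropy_take_succ (t : Fin n) :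
    negEntropy μ (fun ω => (m ω, Fin.take (t + 1) t.isLt (x ω)))
      = negEntropy μ (fun ω => ((m ω, Fin.take t t.isLt.le (x ω)), x ω t)) := by
  have he : Function.Injective fun p : (M × (Fin t → X)) × X =>
      (p.1.1, (Fin.snoc p.1.2 p.2 : Fin (t + 1) → X)) := by
    rintro ⟨⟨a, v⟩, y⟩ ⟨⟨a', v'⟩, y'⟩ h
    simp_all
  simp only [Fin.take_succ_eq_snoc _ t.isLt]
  exact negEntropy_comp_of_injective μ (fun ω => ((m ω, Fin.take t t.isLt.le (x ω)), x ω t)) he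

theorem sum_miFun_take (hμ : ∀ ω, 0 ≤ μ ω) :
    ∑ t : Fin n, miFun μ (fun ω => (m ω, Fin.take t t.isLt.le (x ω))) (fun ω => x ω t)
      = negEntropy μ (fun ω => (m ω, x ω)) - negEntropy μ m
        - ∑ t, negEntropy μ (fun ω => x ω t) := by
  let H : Fin (n + 1) → ℝ := fun k =>
    negEntropy μ (fun ω => (m ω, Fin.take k (Nat.lt_succ_iff.mp k.isLt) (x ω)))
  have hstep : ∀ t : Fin n,
      miFun μ (fun ω => (m ω, Fin.take t t.isLt.le (x ω))) (fun ω => x ω t)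
        = H t.succ - H t.castSucc - negEntropy μ (fun ω => x ω t) := fun t => by
    rw [miFun_eq_negEntropy hμ, ← negEntropy_take_succ]
    rfl
  have hlast : H (Fin.last n) = negEntropy μ (fun ω => (m ω, x ω)) := by
    simp only [H, Fin.val_last, Fin.take_eq_self]
  rw [sum_congr rfl fun t _ => hstep t, sum_sub_distrib, Fin.sum_succ_sub_castSucc, hlast,
    ← negEntropy_take_zero μ m x]
  rfl

end ChainRule

theorem single_letterization_identity_general
    {M X : Type} [Fintype M] [Fintype X] [DecidableEq M] [DecidableEq X]
    (n : ℕ)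
    -- μ is the joint law of (M, Xⁿ)
    (μ : M × (Fin n → X) → ℝ) (hμ0 : ∀ ω, 0 ≤ μ ω) (hμ1 : ∑ ω, μ ω = 1)
    (P : X → ℝ) (hP0 : ∀ x, 0 < P x) (hP1 : ∑ x, P x = 1) :
    -- the identity
    (miFun μ Prod.fst Prod.snd
      = (∑ t : Fin n,
          miFun μ (fun ω => (ω.1, fun s : Fin t.val => ω.2 (Fin.castLE t.isLt.le s)))
            (fun ω => ω.2 t))
        + (∑ t : Fin n, ∑ x : X,
            (∑ ω, if ω.2 t = x then μ ω else 0) *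
              Real.log ((∑ ω, if ω.2 t = x then μ ω else 0) / P x))
        - (∑ xs : Fin n → X,
            (∑ m, μ (m, xs)) * Real.log ((∑ m, μ (m, xs)) / ∏ t, P (xs t))))
    ∧
    -- in particular, the lower bound on I(M;Xⁿ)
    ((∑ t : Fin n,
          miFun μ (fun ω => (ω.1, fun s : Fin t.val => ω.2 (Fin.castLE t.isLt.le s)))
            (fun ω => ω.2 t))
        - (∑ xs : Fin n → X,
            (∑ m, μ (m, xs)) * Real.log ((∑ m, μ (m, xs)) / ∏ t, P (xs t)))
      ≤ miFun μ Prod.fst Prod.snd) := by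
  simp only [← marginal.eq_1, ← marginal_snd]
  have hP : ∀ y, P y ≠ 0 := fun y => (hP0 y).ne'
  have hchain := sum_miFun_take μ Prod.fst Prod.snd hμ0
  unfold Fin.take at hchain
  have hcoordinates : ∑ t : Fin n, ∑ y,
      marginal μ (fun ω => ω.2 t) y * log (marginal μ (fun ω => ω.2 t) y / P y)
        = ∑ t, negEntropy μ (fun ω => ω.2 t)
          - ∑ t, ∑ y, marginal μ (fun ω => ω.2 t) y * log (P y) := by
    rw [← sum_sub_distrib]
    exact sum_congr rfl fun t _ => sum_marginal_mul_log_div μ _ hP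
  have hproduct := sum_marginal_mul_log_div μ Prod.snd (q := fun xs => ∏ t, P (xs t))
    fun xs => prod_ne_zero_iff.2 fun t _ => hP _
  rw [sum_marginal_mul_log_prod μ Prod.snd hP] at hproduct
  have hgibbs : 0 ≤ ∑ t : Fin n, ∑ y,
      marginal μ (fun ω => ω.2 t) y * log (marginal μ (fun ω => ω.2 t) y / P y) :=
    sum_nonneg fun t _ => sum_mul_log_div_nonneg _ _ (marginal_nonneg hμ0 _) hP0
      (by rw [sum_marginal, hμ1, hP1])
  have hidentity := miFun_eq_negEntropy hμ0 Prod.fst Prod.snd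
  constructor <;> linarith

theorem single_letterization_identity
    {M X : Type} [Fintype M] [Fintype X] [DecidableEq M] [DecidableEq X]
    [Nonempty M] [Nonempty X] (n : ℕ)
    -- μ is the joint law of (M, Xⁿ)
    (μ : M × (Fin n → X) → ℝ) (hμ0 : ∀ ω, 0 ≤ μ ω) (hμ1 : ∑ ω, μ ω = 1)
    (P : X → ℝ) (hP0 : ∀ x, 0 < P x) (hP1 : ∑ x, P x = 1) :
    -- the identity
    (miFun μ Prod.fst Prod.snd
      = (∑ t : Fin n,
          miFun μ (fun ω => (ω.1, fun s : Fin t.val => ω.2 (Fin.castLE t.isLt.le s)))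
            (fun ω => ω.2 t))
        + (∑ t : Fin n, ∑ x : X,
            (∑ ω, if ω.2 t = x then μ ω else 0) *
              Real.log ((∑ ω, if ω.2 t = x then μ ω else 0) / P x))
        - (∑ xs : Fin n → X,
            (∑ m, μ (m, xs)) * Real.log ((∑ m, μ (m, xs)) / ∏ t, P (xs t))))
    ∧
    -- in particular, the lower bound on I(M;Xⁿ)
    ((∑ t : Fin n,
          miFun μ (fun ω => (ω.1, fun s : Fin t.val => ω.2 (Fin.castLE t.isLt.le s)))
            (fun ω => ω.2 t))
        - (∑ xs : Fin n → X,
            (∑ m, μ (m, xs)) * Real.log ((∑ m, μ (m, xs)) / ∏ t, P (xs t)))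
      ≤ miFun μ Prod.fst Prod.snd) :=
  single_letterization_identity_general n μ hμ0 hμ1 P hP0 hP1
end
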